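/- Realisability of non-crossing matchings: Let N ≥ 1 and let a⁺, b⁺, a⁻, b⁻ be nonnegative integers such that a⁺ + b⁺, a⁻ + b⁻, and N all have the same parity, and n_tot := a⁺ + b⁺ + a⁻ + b⁻ ≤ N. Then for every non-crossing perfect matching σ of ⟦1, n_tot⟧ (with respect to the cyclic order of the ends around the interval) there exists a configuration η ∈ ({−1,+1}²)^{⟦1,N⟧} whose induced graph has exactly a⁺ top-left, b⁺ top-right, a⁻ bottom-left, b⁻ bottom-right outgoing edges, and whose induced matching of the ends is σ. -/

import Mathlib

attribute [local instance] Classical.propDecidable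

/-- `Matched ε x y`: in the sequence of parentheses `ε : ℤ → {±1}` (`+1` = opening,
`-1` = closing), the opening parenthesis at `x` is paired with the closing one at `y`. -/
def Matched (ε : ℤ → ℤ) (x y : ℤ) : Prop :=
  x < y ∧ ε x = 1 ∧ ε y = -1 ∧
    (∀ z, x ≤ z → z < y → 0 < ∑ i ∈ Finset.Icc x z, ε i) ∧
    (∑ i ∈ Finset.Icc x y, ε i) = 0

/-- Unordered version of `Matched`. -/
def MatchedSym (ε : ℤ → ℤ) (x y : ℤ) : Prop :=
  Matched ε x y ∨ Matched ε y x

/-- Completion of a configuration on `⟦1,N⟧` by all-opening on the left of `1` and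
all-closing on the right of `N`. -/
def complete (N : ℕ) (f : ℤ → ℤ) : ℤ → ℤ :=
  fun x => if x < 1 then 1 else if (N : ℤ) < x then -1 else f x

/-- The upper (resp. lower) completed parenthesis sequence of `η : ℤ → ℤ × ℤ`. -/
def upper (N : ℕ) (η : ℤ → ℤ × ℤ) : ℤ → ℤ := complete N (fun z => (η z).1)
def lower (N : ℕ) (η : ℤ → ℤ × ℤ) : ℤ → ℤ := complete N (fun z => (η z).2)

/-- Points of `⟦1,N⟧` carrying a top-left dangling end (upper arc to a point `< 1`). -/
noncomputable def UL (N : ℕ) (η : ℤ → ℤ × ℤ) : Finset ℤ :=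
  (Finset.Icc (1 : ℤ) N).filter (fun x => ∃ y, y < 1 ∧ MatchedSym (upper N η) y x)
/-- Top-right dangling ends (upper arc to a point `> N`). -/
noncomputable def UR (N : ℕ) (η : ℤ → ℤ × ℤ) : Finset ℤ :=
  (Finset.Icc (1 : ℤ) N).filter (fun x => ∃ y, (N : ℤ) < y ∧ MatchedSym (upper N η) x y)
/-- Bottom-left dangling ends. -/
noncomputable def LL (N : ℕ) (η : ℤ → ℤ × ℤ) : Finset ℤ :=
  (Finset.Icc (1 : ℤ) N).filter (fun x => ∃ y, y < 1 ∧ MatchedSym (lower N η) y x)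
/-- Bottom-right dangling ends. -/
noncomputable def LR (N : ℕ) (η : ℤ → ℤ × ℤ) : Finset ℤ :=
  (Finset.Icc (1 : ℤ) N).filter (fun x => ∃ y, (N : ℤ) < y ∧ MatchedSym (lower N η) x y)

/-- The dangling ends listed in clockwise cyclic order around the interval, starting
from the bottommost top-left end: top-left ends from innermost to outermost
(increasing position), then top-right ends from outermost to innermost (increasing
position), then bottom-right ends (decreasing position), then bottom-left ends
(decreasing position). -/
noncomputable def endsList (N : ℕ) (η : ℤ → ℤ × ℤ) : List ℤ :=
  ((UL N η).sort (· ≤ ·)) ++ ((UR N η).sort (· ≤ ·))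
    ++ ((LR N η).sort (· ≤ ·)).reverse ++ ((LL N η).sort (· ≤ ·)).reverse

/-- The vertex of `⟦1,N⟧` carrying the `k`-th dangling end (`k = 1, …, n_tot`). -/
noncomputable def endPoint (N : ℕ) (η : ℤ → ℤ × ℤ) (k : ℕ) : ℤ :=
  (endsList N η).getD (k - 1) 0

/-- Reachability inside `⟦1,N⟧`: two vertices are joined by a path of the graph `G`
all of whose vertices lie in `⟦1,N⟧`. -/
def InsideReach (N : ℕ) (η : ℤ → ℤ × ℤ) : ℤ → ℤ → Prop :=
  Relation.ReflTransGen (fun a b =>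
    a ∈ Set.Icc (1 : ℤ) (N : ℤ) ∧ b ∈ Set.Icc (1 : ℤ) (N : ℤ) ∧
      (MatchedSym (upper N η) a b ∨ MatchedSym (lower N η) a b))

/-!
Place the `n` ends on the vertices `1, …, m` of the interval, the upper ends `1, …, u` in
increasing and the lower ends `u + 1, …, n` in decreasing order, the two ends of each chord of `σ`
joining the two sides sharing a vertex. These chords are nested, so they cut the interval into
regions, and in each region the upper ends come first. A chord between two lower (upper) ends
becomes an arc of the upper (lower) half-plane. Non-crossingness of `σ` makes both arc systems
non-crossing and keeps the dangling ends of each half-plane outside its arcs, and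
`m ≡ u ≡ N (mod 2)` lets the vertices `m + 1, …, N` be paired by consecutive arcs. In such an arc
diagram the parenthesis pairing is the diagram itself: the two ends of an arc contribute opposite
signs to every partial sum containing both.
-/

open Finset

lemma sum_Icc_add_sum_Icc (f : ℤ → ℤ) {a b c : ℤ} (hab : a ≤ b + 1) (hbc : b ≤ c) :
    ∑ i ∈ Icc a b, f i + ∑ i ∈ Icc (b + 1) c, f i = ∑ i ∈ Icc a c, f i := by
  rw [← sum_union (disjoint_left.2 fun x hx hx' => by simp only [mem_Icc] at hx hx'; omega)]
  congr 1
  ext x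
  simp only [mem_union, mem_Icc]
  omega

lemma sum_Icc_eq_of_forall_eq (f : ℤ → ℤ) {a b c : ℤ} (hab : a ≤ b + 1)
    (h : ∀ x, a ≤ x → x ≤ b → f x = c) : ∑ i ∈ Icc a b, f i = (b + 1 - a) * c := by
  rw [sum_congr rfl fun x hx => h x (mem_Icc.1 hx).1 (mem_Icc.1 hx).2, sum_const, Int.card_Icc,
    nsmul_eq_mul, Int.toNat_of_nonneg (by omega)]

lemma even_card_of_involution {α : Type*} {s : Finset α} (g : α → α) (hmem : ∀ x ∈ s, g x ∈ s)
    (hinv : ∀ x ∈ s, g (g x) = x) (hne : ∀ x ∈ s, g x ≠ x) : Even #s := by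
  have : ∑ _x ∈ s, (1 : ZMod 2) = 0 :=
    sum_involution (fun x _ => g x) (fun _ _ => by decide) (fun x hx _ => hne x hx) hmem hinv
  rwa [sum_const, nsmul_one, ZMod.natCast_eq_zero_iff_even] at this

section Rank

variable {ι α : Type*} [LinearOrder α] (s : Finset ι) (f : ι → α)

lemma card_filter_le_mono {a b : α} (hab : a ≤ b) : #{i ∈ s | f i ≤ a} ≤ #{i ∈ s | f i ≤ b} :=
  card_le_card (monotone_filter_right s fun _ _ h => h.trans hab)

lemma card_filter_le_lt {a : α} {j : ι} (hj : j ∈ s) (h : a < f j) :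
    #{i ∈ s | f i ≤ a} < #{i ∈ s | f i ≤ f j} := by
  refine card_lt_card ⟨monotone_filter_right s fun _ _ hi => hi.trans h.le, fun hsub => ?_⟩
  have := (mem_filter.1 (hsub (mem_filter.2 ⟨hj, le_rfl⟩))).2
  exact absurd h (not_lt.2 this)

end Rank

lemma sort_image_Icc_of_strictMonoOn {f : ℕ → ℤ} {a b : ℕ} (hf : StrictMonoOn f (Set.Icc a b)) :
    ((Icc a b).image f).sort (· ≤ ·) = (List.range' a (b + 1 - a)).map f := by
  refine (sortedLT_sort _).eq_of_mem_iff ?_ fun x => ?_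
  · rw [List.sortedLT_iff_pairwise, List.pairwise_map]
    refine (List.pairwise_lt_range' _ Nat.one_pos).imp_of_mem fun hi hj hij => hf ?_ ?_ hij <;>
      · simp only [List.mem_range'_1] at hi hj
        constructor <;> omega
  · simp only [mem_sort, mem_image, mem_Icc, List.mem_map, List.mem_range'_1]
    constructor <;> rintro ⟨k, hk, rfl⟩ <;> exact ⟨k, by omega, rfl⟩

lemma sort_image_Icc_of_strictAntiOn {f : ℕ → ℤ} {a b : ℕ} (hf : StrictAntiOn f (Set.Icc a b)) :
    ((Icc a b).image f).sort (· ≤ ·) = ((List.range' a (b + 1 - a)).map f).reverse := by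
  refine (sortedLT_sort _).eq_reverse_of_mem_iff_of_sortedGT (fun x => ?_) ?_
  · simp only [mem_sort, mem_image, mem_Icc, List.mem_map, List.mem_range'_1]
    constructor <;> rintro ⟨k, hk, rfl⟩ <;> exact ⟨k, by omega, rfl⟩
  · rw [List.sortedGT_iff_pairwise, List.pairwise_map]
    refine (List.pairwise_lt_range' _ Nat.one_pos).imp_of_mem fun hi hj hij => hf ?_ ?_ hij <;>
      · simp only [List.mem_range'_1] at hi hj
        constructor <;> omega

lemma range'_append_range' {a b c : ℕ} (hab : a ≤ b + 1) (hbc : b ≤ c) :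
    List.range' a (b + 1 - a) ++ List.range' (b + 1) (c + 1 - (b + 1)) =
      List.range' a (c + 1 - a) := by
  have := List.range'_append_1 (s := a) (m := b + 1 - a) (n := c + 1 - (b + 1))
  rwa [show a + (b + 1 - a) = b + 1 by omega,
    show b + 1 - a + (c + 1 - (b + 1)) = c + 1 - a by omega] at this

lemma matched_of_suffix_sum_neg {ε : ℤ → ℤ} (hleft : ∀ x < 1, ε x = 1) {d : ℤ} (hd : 1 ≤ d)
    (hεd : ε d = -1) (hsuf : ∀ z, 1 ≤ z → z ≤ d → ∑ i ∈ Icc z d, ε i < 0) :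
    Matched ε (∑ i ∈ Icc 1 d, ε i + 1) d := by
  set S := ∑ i ∈ Icc 1 d, ε i
  have hS : S < 0 := hsuf 1 le_rfl hd
  have hhead : ∀ z, S + 1 ≤ z → z ≤ 0 → ∑ i ∈ Icc (S + 1) z, ε i = z - S := by
    intro z h1 h2
    rw [sum_Icc_eq_of_forall_eq ε (by omega) fun x _ hx => hleft x (by omega)]
    ring
  have hsplit : ∀ z, 1 ≤ z → z ≤ d →
      ∑ i ∈ Icc (S + 1) z, ε i = ∑ i ∈ Icc 1 z, ε i - S := by
    intro z h1 h2
    rw [← sum_Icc_add_sum_Icc ε (b := 0) (by omega) (by omega), hhead 0 (by omega) le_rfl,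
      zero_add]
    ring
  refine ⟨by omega, hleft _ (by omega), hεd, fun z hz1 hz2 => ?_, ?_⟩
  · rcases le_or_gt z 0 with hz | hz
    · rw [hhead z hz1 hz]
      omega
    · have := sum_Icc_add_sum_Icc ε (a := 1) (b := z) (c := d) (by omega) hz2.le
      have := hsuf (z + 1) (by omega) (by omega)
      rw [hsplit z hz hz2.le]
      omega
  · rw [hsplit d hd le_rfl, sub_self]

lemma matched_of_prefix_sum_pos {ε : ℤ → ℤ} {R : ℤ} (hright : ∀ x, R < x → ε x = -1) {d : ℤ}
    (hd : d ≤ R) (hεd : ε d = 1) (hpre : ∀ z, d ≤ z → z ≤ R → 0 < ∑ i ∈ Icc d z, ε i) :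
    Matched ε d (R + ∑ i ∈ Icc d R, ε i) := by
  set T := ∑ i ∈ Icc d R, ε i
  have hT : 0 < T := hpre R hd le_rfl
  have hsplit : ∀ z, R ≤ z → z ≤ R + T → ∑ i ∈ Icc d z, ε i = T + R - z := by
    intro z h1 h2
    rw [← sum_Icc_add_sum_Icc ε (b := R) (by omega) h1,
      sum_Icc_eq_of_forall_eq ε (a := R + 1) (by omega) fun x hx _ => hright x (by omega)]
    ring
  refine ⟨by omega, hεd, hright _ (by omega), fun z hz1 hz2 => ?_, ?_⟩
  · rcases le_or_gt z R with hz | hz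
    · exact hpre z hz1 hz
    · rw [hsplit z hz.le hz2.le]
      omega
  · rw [hsplit _ (by omega) le_rfl]
    ring

lemma Matched.sum_Icc_ne_zero {ε : ℤ → ℤ} {x y : ℤ} (h : Matched ε x y) {z : ℤ} (hxz : x < z)
    (hzy : z ≤ y) : ∑ i ∈ Icc z y, ε i ≠ 0 := by
  have hsplit := sum_Icc_add_sum_Icc ε (a := x) (b := z - 1) (c := y) (by omega) (by omega)
  have := h.2.2.2.1 (z - 1) (by omega) (by omega)
  rw [sub_add_cancel, h.2.2.2.2] at hsplit
  omega

lemma complete_of_mem (N : ℕ) (f : ℤ → ℤ) {x : ℤ} (hx1 : 1 ≤ x) (hxN : x ≤ N) :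
    complete N f x = f x := by
  simp only [complete, if_neg (show ¬ x < 1 by omega), if_neg (show ¬ (N : ℤ) < x by omega)]

lemma sum_Icc_complete (N : ℕ) (f : ℤ → ℤ) {a b : ℤ} (ha : 1 ≤ a) (hb : b ≤ N) :
    ∑ i ∈ Icc a b, complete N f i = ∑ i ∈ Icc a b, f i :=
  sum_congr rfl fun _ hx =>
    complete_of_mem N f (ha.trans (mem_Icc.1 hx).1) ((mem_Icc.1 hx).2.trans hb)

noncomputable def arcWord (π : ℤ → ℤ) (L : Set ℤ) (x : ℤ) : ℤ :=
  if π x = x then (if x ∈ L then -1 else 1) else if x < π x then 1 else -1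

/-- The fixed points of `π` are the dangling ends; those in `L` are matched to the left. -/
structure IsArcDiagram (N : ℕ) (π : ℤ → ℤ) (L : Set ℤ) : Prop where
  mapsTo : ∀ x : ℤ, 1 ≤ x → x ≤ N → 1 ≤ π x ∧ π x ≤ N
  invol : ∀ x : ℤ, 1 ≤ x → π (π x) = x
  noncrossing : ∀ x y : ℤ, 1 ≤ x → x < y → y < π x → π x < π y → False
  not_fixed_of_covered : ∀ x d : ℤ, 1 ≤ x → x < d → d < π x → π d ≠ d
  left_lt_right : ∀ a b : ℤ, 1 ≤ a → 1 ≤ b → π a = a → π b = b → a ∈ L → b ∉ L → a < b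

section arcWord

variable {π : ℤ → ℤ} {L : Set ℤ} {x : ℤ}

lemma arcWord_of_lt (hx : x < π x) : arcWord π L x = 1 := by
  simp only [arcWord, if_neg hx.ne', if_pos hx]

lemma arcWord_of_gt (hx : π x < x) : arcWord π L x = -1 := by
  simp only [arcWord, if_neg hx.ne, if_neg (not_lt.2 hx.le)]

lemma arcWord_of_mem (hx : π x = x) (hL : x ∈ L) : arcWord π L x = -1 := by
  simp only [arcWord, if_pos hx, if_pos hL]

lemma arcWord_of_notMem (hx : π x = x) (hL : x ∉ L) : arcWord π L x = 1 := by
  simp only [arcWord, if_pos hx, if_neg hL]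

lemma arcWord_eq_one_or (π : ℤ → ℤ) (L : Set ℤ) (x : ℤ) :
    arcWord π L x = 1 ∨ arcWord π L x = -1 := by
  unfold arcWord
  split_ifs <;> simp

end arcWord

namespace IsArcDiagram

variable {N : ℕ} {π : ℤ → ℤ} {L : Set ℤ}

lemma arcWord_apply_add_arcWord (h : IsArcDiagram N π L) {x : ℤ} (hx1 : 1 ≤ x) (hx : π x ≠ x) :
    arcWord π L x + arcWord π L (π x) = 0 := by
  have hinv := h.invol x hx1
  simp only [arcWord, if_neg hx, hinv]
  split_ifs <;> omega

lemma mem_arc_of_covered (h : IsArcDiagram N π L) {x y : ℤ} (hx1 : 1 ≤ x) (hxN : x ≤ N)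
    (hxy : x < y) (hyx : y < π x) : π y ≠ y ∧ x < π y ∧ π y < π x := by
  have hπx := h.mapsTo x hx1 hxN
  have hπy := h.mapsTo y (by omega) (by omega)
  have hinvx := h.invol x hx1
  have hinvy := h.invol y (by omega)
  refine ⟨h.not_fixed_of_covered x y hx1 hxy hyx, ?_, ?_⟩
  · by_contra! hyle
    rcases hyle.lt_or_eq with hlt | heq
    · exact h.noncrossing (π y) x hπy.1 hlt (by omega) (by omega)
    · rw [← heq] at hyx
      omega
  · by_contra! hyle
    rcases hyle.lt_or_eq with hlt | heq
    · exact h.noncrossing x y hx1 hxy hyx hlt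
    · have := congrArg π heq
      omega

/-- Arcs with both ends in `I` cancel in the sum of the word over `I`. -/
lemma sum_arcWord_eq (h : IsArcDiagram N π L) {I : Finset ℤ} (hI : ∀ x ∈ I, 1 ≤ x)
    {c : ℤ} (hc : ∀ x ∈ I, π x = x ∨ π x ∉ I → arcWord π L x = c) :
    ∑ x ∈ I, arcWord π L x = #{x ∈ I | π x = x ∨ π x ∉ I} * c := by
  rw [← sum_filter_add_sum_filter_not I (fun x => π x = x ∨ π x ∉ I),
    sum_congr rfl fun x hx => hc x (mem_filter.1 hx).1 (mem_filter.1 hx).2, sum_const,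
    nsmul_eq_mul, add_eq_left]
  refine sum_involution (fun x _ => π x) (fun x hx => ?_) (fun x hx _ => ?_) (fun x hx => ?_)
    (fun x hx => ?_) <;> simp only [mem_filter, not_or, not_not] at hx ⊢
  · exact h.arcWord_apply_add_arcWord (hI x hx.1) hx.2.1
  · exact hx.2.1
  · rw [h.invol x (hI x hx.1)]
    exact ⟨hx.2.2, fun h' => hx.2.1 h'.symm, hx.1⟩
  · exact h.invol x (hI x hx.1)

lemma sum_arc (h : IsArcDiagram N π L) {x : ℤ} (hx1 : 1 ≤ x) (hxN : x ≤ N) (hlt : x < π x) :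
    ∑ i ∈ Icc x (π x), arcWord π L i = 0 := by
  have hπx := h.mapsTo x hx1 hxN
  have hinv := h.invol x hx1
  rw [h.sum_arcWord_eq (c := 0) (fun y hy => by simp only [mem_Icc] at hy; omega), mul_zero]
  intro y hy hb
  simp only [mem_Icc] at hy
  exfalso
  rcases hy.1.lt_or_eq with h1 | rfl
  · rcases hy.2.lt_or_eq with h2 | rfl
    · have := h.mem_arc_of_covered hx1 hxN h1 h2
      simp only [mem_Icc] at hb
      omega
    · simp only [mem_Icc, hinv] at hb
      omega
  · simp only [mem_Icc] at hb
    omega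

lemma sum_prefix_arc_pos (h : IsArcDiagram N π L) {x z : ℤ} (hx1 : 1 ≤ x) (hxN : x ≤ N)
    (hxz : x ≤ z) (hz : z < π x) : 0 < ∑ i ∈ Icc x z, arcWord π L i := by
  have hπx := h.mapsTo x hx1 hxN
  have hopen : ∀ y ∈ Icc x z, π y = y ∨ π y ∉ Icc x z → arcWord π L y = 1 := by
    intro y hy hb
    simp only [mem_Icc] at hy hb
    have hy' : π y ≠ y ∧ y < π y := by
      rcases hy.1.lt_or_eq with h1 | rfl
      · have := h.mem_arc_of_covered hx1 hxN h1 (by omega)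
        omega
      · omega
    exact arcWord_of_lt hy'.2
  rw [h.sum_arcWord_eq (I := Icc x z) (fun y hy => by simp only [mem_Icc] at hy; omega) hopen,
    mul_one]
  have hx : x ∈ {y ∈ Icc x z | π y = y ∨ π y ∉ Icc x z} := by
    simp only [mem_filter, mem_Icc]
    omega
  exact_mod_cast card_pos.2 ⟨x, hx⟩

lemma sum_suffix_neg (h : IsArcDiagram N π L) {d z : ℤ} (hz1 : 1 ≤ z) (hzd : z ≤ d)
    (hdN : d ≤ N) (hd : π d = d) (hdL : d ∈ L) : ∑ i ∈ Icc z d, arcWord π L i < 0 := by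
  have hclose : ∀ y ∈ Icc z d, π y = y ∨ π y ∉ Icc z d → arcWord π L y = -1 := by
    intro y hy hb
    simp only [mem_Icc] at hy hb
    have hπy := h.mapsTo y (by omega) (by omega)
    by_cases hfix : π y = y
    · by_cases hyL : y ∈ L
      · exact arcWord_of_mem hfix hyL
      · have := h.left_lt_right d y (by omega) (by omega) hd hfix hdL hyL
        omega
    · refine arcWord_of_gt (lt_of_le_of_ne (not_lt.1 fun hlt => ?_) hfix)
      exact h.not_fixed_of_covered y d (by omega)
        (lt_of_le_of_ne hy.2 fun hyd => hfix (hyd ▸ hd)) (by omega) hd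
  rw [h.sum_arcWord_eq (I := Icc z d) (fun y hy => by simp only [mem_Icc] at hy; omega) hclose]
  have hx : d ∈ {y ∈ Icc z d | π y = y ∨ π y ∉ Icc z d} := by
    simp only [mem_filter, mem_Icc]
    omega
  have := card_pos.2 ⟨d, hx⟩
  omega

lemma sum_prefix_pos (h : IsArcDiagram N π L) {d z : ℤ} (hd1 : 1 ≤ d) (hdz : d ≤ z)
    (hzN : z ≤ N) (hd : π d = d) (hdL : d ∉ L) : 0 < ∑ i ∈ Icc d z, arcWord π L i := by
  have hopen : ∀ y ∈ Icc d z, π y = y ∨ π y ∉ Icc d z → arcWord π L y = 1 := by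
    intro y hy hb
    simp only [mem_Icc] at hy hb
    have hπy := h.mapsTo y (by omega) (by omega)
    have hinv := h.invol y (by omega)
    by_cases hfix : π y = y
    · by_cases hyL : y ∈ L
      · have := h.left_lt_right y d (by omega) hd1 hfix hd hyL hdL
        omega
      · exact arcWord_of_notMem hfix hyL
    · refine arcWord_of_lt (lt_of_le_of_ne (not_lt.1 fun hlt => ?_) (Ne.symm hfix))
      refine h.not_fixed_of_covered (π y) d hπy.1 (by omega) ?_ hd
      rw [hinv]
      exact lt_of_le_of_ne hy.1 fun hyd => hfix (hyd ▸ hd)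
  rw [h.sum_arcWord_eq (I := Icc d z) (fun y hy => by simp only [mem_Icc] at hy; omega) hopen]
  have hx : d ∈ {y ∈ Icc d z | π y = y ∨ π y ∉ Icc d z} := by
    simp only [mem_filter, mem_Icc]
    omega
  have := card_pos.2 ⟨d, hx⟩
  omega

theorem matched (h : IsArcDiagram N π L) {x : ℤ} (hx1 : 1 ≤ x) (hxN : x ≤ N) (hlt : x < π x) :
    Matched (complete N (arcWord π L)) x (π x) := by
  have hπx := h.mapsTo x hx1 hxN
  have hinv := h.invol x hx1
  refine ⟨hlt, ?_, ?_, fun z hxz hz => ?_, ?_⟩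
  · rw [complete_of_mem N _ hx1 hxN, arcWord_of_lt hlt]
  · rw [complete_of_mem N _ hπx.1 hπx.2, arcWord_of_gt (by rw [hinv]; exact hlt)]
  · rw [sum_Icc_complete N _ hx1 (by omega)]
    exact h.sum_prefix_arc_pos hx1 hxN hxz hz
  · rw [sum_Icc_complete N _ hx1 hπx.2]
    exact h.sum_arc hx1 hxN hlt

theorem matchedSym (h : IsArcDiagram N π L) {x : ℤ} (hx1 : 1 ≤ x) (hxN : x ≤ N) (hx : π x ≠ x) :
    MatchedSym (complete N (arcWord π L)) x (π x) := by
  have hπx := h.mapsTo x hx1 hxN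
  rcases lt_or_gt_of_ne hx with hlt | hlt
  · right
    have := h.matched hπx.1 hπx.2 (by rwa [h.invol x hx1])
    rwa [h.invol x hx1] at this
  · exact Or.inl (h.matched hx1 hxN hlt)

lemma fixed_mem_of_matched (h : IsArcDiagram N π L) {x y : ℤ} (hx1 : 1 ≤ x) (hxN : x ≤ N)
    (hy : y < 1) (hm : Matched (complete N (arcWord π L)) y x) : π x = x ∧ x ∈ L := by
  have hεx := hm.2.2.1
  rw [complete_of_mem N _ hx1 hxN] at hεx
  by_cases hfix : π x = x
  · refine ⟨hfix, by_contra fun hL => ?_⟩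
    rw [arcWord_of_notMem hfix hL] at hεx
    omega
  · have hπx := h.mapsTo x hx1 hxN
    have hinv := h.invol x hx1
    rcases lt_or_gt_of_ne hfix with hlt | hlt
    · refine absurd ?_ (hm.sum_Icc_ne_zero (z := π x) (by omega) hlt.le)
      rw [sum_Icc_complete N _ hπx.1 hxN]
      simpa only [hinv] using h.sum_arc (x := π x) hπx.1 hπx.2 (by rwa [hinv])
    · rw [arcWord_of_lt hlt] at hεx
      omega

lemma matched_of_fixed_mem (h : IsArcDiagram N π L) {x : ℤ} (hx1 : 1 ≤ x) (hxN : x ≤ N)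
    (hfix : π x = x) (hL : x ∈ L) :
    Matched (complete N (arcWord π L)) (∑ i ∈ Icc 1 x, arcWord π L i + 1) x := by
  have := matched_of_suffix_sum_neg (ε := complete N (arcWord π L))
    (fun y hy => by simp only [complete, if_pos hy]) hx1
    (by rw [complete_of_mem N _ hx1 hxN, arcWord_of_mem hfix hL]) fun z hz1 hzx => by
      rw [sum_Icc_complete N _ hz1 hxN]
      exact h.sum_suffix_neg hz1 hzx hxN hfix hL
  rwa [sum_Icc_complete N _ le_rfl hxN] at this

lemma fixed_notMem_of_matched (h : IsArcDiagram N π L) {x y : ℤ} (hx1 : 1 ≤ x) (hxN : x ≤ N)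
    (hy : (N : ℤ) < y) (hm : Matched (complete N (arcWord π L)) x y) : π x = x ∧ x ∉ L := by
  have hεx := hm.2.1
  rw [complete_of_mem N _ hx1 hxN] at hεx
  by_cases hfix : π x = x
  · refine ⟨hfix, fun hL => ?_⟩
    rw [arcWord_of_mem hfix hL] at hεx
    omega
  · have hπx := h.mapsTo x hx1 hxN
    rcases lt_or_gt_of_ne hfix with hlt | hlt
    · rw [arcWord_of_gt hlt] at hεx
      omega
    · have := hm.2.2.2.1 (π x) hlt.le (by omega)
      rw [sum_Icc_complete N _ hx1 hπx.2, h.sum_arc hx1 hxN hlt] at this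
      exact absurd this (lt_irrefl 0)

lemma matched_of_fixed_notMem (h : IsArcDiagram N π L) {x : ℤ} (hx1 : 1 ≤ x) (hxN : x ≤ N)
    (hfix : π x = x) (hL : x ∉ L) :
    Matched (complete N (arcWord π L)) x (N + ∑ i ∈ Icc x N, arcWord π L i) := by
  have := matched_of_prefix_sum_pos (ε := complete N (arcWord π L)) (R := N)
    (fun y hy => by simp only [complete, if_neg (show ¬ y < 1 by omega), if_pos hy]) hxN
    (by rw [complete_of_mem N _ hx1 hxN, arcWord_of_notMem hfix hL]) fun z hxz hzN => by
      rw [sum_Icc_complete N _ hx1 hzN]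
      exact h.sum_prefix_pos hx1 hxz hzN hfix hL
  rwa [sum_Icc_complete N _ hx1 le_rfl] at this

theorem filter_matched_left (h : IsArcDiagram N π L) :
    {x ∈ Icc (1 : ℤ) N | ∃ y, y < 1 ∧ MatchedSym (complete N (arcWord π L)) y x}
      = {x ∈ Icc (1 : ℤ) N | π x = x ∧ x ∈ L} := by
  refine filter_congr fun x hx => ?_
  simp only [mem_Icc] at hx
  refine ⟨fun ⟨y, hy, hm⟩ => hm.elim (h.fixed_mem_of_matched hx.1 hx.2 hy)
    fun hm => absurd hm.1 (by omega), fun ⟨hfix, hL⟩ =>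
      ⟨_, ?_, Or.inl (h.matched_of_fixed_mem hx.1 hx.2 hfix hL)⟩⟩
  have := h.sum_suffix_neg le_rfl hx.1 hx.2 hfix hL
  omega

theorem filter_matched_right (h : IsArcDiagram N π L) :
    {x ∈ Icc (1 : ℤ) N | ∃ y, (N : ℤ) < y ∧ MatchedSym (complete N (arcWord π L)) x y}
      = {x ∈ Icc (1 : ℤ) N | π x = x ∧ x ∉ L} := by
  refine filter_congr fun x hx => ?_
  simp only [mem_Icc] at hx
  refine ⟨fun ⟨y, hy, hm⟩ => hm.elim (h.fixed_notMem_of_matched hx.1 hx.2 hy)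
    fun hm => absurd hm.1 (by omega), fun ⟨hfix, hL⟩ =>
      ⟨_, ?_, Or.inl (h.matched_of_fixed_notMem hx.1 hx.2 hfix hL)⟩⟩
  have := h.sum_prefix_pos hx.1 hx.2 le_rfl hfix hL
  omega

end IsArcDiagram

structure IsNoncrossingMatching (n : ℕ) (σ : ℕ → ℕ) : Prop where
  mem : ∀ i, 1 ≤ i → i ≤ n → 1 ≤ σ i ∧ σ i ≤ n
  invol : ∀ i, 1 ≤ i → i ≤ n → σ (σ i) = i
  ne : ∀ i, 1 ≤ i → i ≤ n → σ i ≠ i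
  noncrossing : ∀ i j, 1 ≤ i → j ≤ n → i < j → j < σ i → σ i < σ j → False

namespace IsNoncrossingMatching

variable {n : ℕ} {σ : ℕ → ℕ}

lemma noncrossing_rev (hσ : IsNoncrossingMatching n σ) {a b : ℕ} (ha : a ≤ n) (hb1 : 1 ≤ b)
    (h1 : σ b < σ a) (h2 : σ a < b) (h3 : b < a) : False := by
  have hσa := hσ.mem a (by omega) ha
  have hσb := hσ.mem b hb1 (by omega)
  exact hσ.noncrossing (σ b) (σ a) hσb.1 hσa.2 h1 (by rwa [hσ.invol b hb1 (by omega)])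
    (by rw [hσ.invol b hb1 (by omega), hσ.invol a (by omega) ha]; exact h3)

lemma injOn (hσ : IsNoncrossingMatching n σ) {a b : ℕ} (ha1 : 1 ≤ a) (ha : a ≤ n) (hb1 : 1 ≤ b)
    (hb : b ≤ n) (h : σ a = σ b) : a = b := by
  rw [← hσ.invol a ha1 ha, h, hσ.invol b hb1 hb]

end IsNoncrossingMatching

noncomputable section VertexLayout

variable (n u : ℕ) (σ : ℕ → ℕ)

/-- The number of chords between the two sides that lie to the left of the vertex of `k`. -/
def region (k : ℕ) : ℕ := #{t ∈ Icc 1 u | u < σ t ∧ if k ≤ u then t < k else k < σ t}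

/-- Inside a region, the upper ends of chords between two upper ends come first, by increasing
index, then the other vertices, by decreasing index of their lower end. -/
def slot (k : ℕ) : ℕ := if k ≤ u ∧ σ k ≤ u then k else 2 * n + 1 - if k ≤ u then σ k else k

def vertexKey (k : ℕ) : ℕ ×ₗ ℕ := toLex (region u σ k, slot n u σ k)

/-- One end per vertex: the upper end of a chord between the two sides represents its vertex. -/
def vertexEnds : Finset ℕ := {k ∈ Icc 1 n | k ≤ u ∨ u < σ k}

def numVertices : ℕ := #(vertexEnds n u σ)

def vertexPos (k : ℕ) : ℕ := #{v ∈ vertexEnds n u σ | vertexKey n u σ v ≤ vertexKey n u σ k}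

variable {n u σ}

lemma vertexKey_lt_vertexKey_iff {a b : ℕ} : vertexKey n u σ a < vertexKey n u σ b ↔
    region u σ a < region u σ b ∨ region u σ a = region u σ b ∧ slot n u σ a < slot n u σ b :=
  Prod.Lex.toLex_lt_toLex

lemma vertexKey_eq_vertexKey_iff {a b : ℕ} : vertexKey n u σ a = vertexKey n u σ b ↔
    region u σ a = region u σ b ∧ slot n u σ a = slot n u σ b := by
  simp only [vertexKey, toLex_inj, Prod.mk.injEq]

lemma vertexKey_lt_vertexKey_iff' {a b : ℕ} : vertexKey n u σ a < vertexKey n u σ b ↔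
    region u σ a ≤ region u σ b ∧ (region u σ a = region u σ b → slot n u σ a < slot n u σ b) :=
  Prod.Lex.toLex_lt_toLex'

lemma region_of_le {k : ℕ} (hk : k ≤ u) : region u σ k = #{t ∈ Icc 1 u | u < σ t ∧ t < k} := by
  simp only [region, if_pos hk]

lemma region_of_lt {k : ℕ} (hk : u < k) :
    region u σ k = #{t ∈ Icc 1 u | u < σ t ∧ k < σ t} := by
  simp only [region, if_neg (not_le.2 hk)]

lemma slot_of_le_of_le {k : ℕ} (hk : k ≤ u) (hσk : σ k ≤ u) : slot n u σ k = k := by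
  simp only [slot, if_pos (And.intro hk hσk)]

lemma slot_of_le_of_lt {k : ℕ} (hk : k ≤ u) (hσk : u < σ k) : slot n u σ k = 2 * n + 1 - σ k := by
  simp only [slot, if_neg (fun h : k ≤ u ∧ σ k ≤ u => absurd h.2 (not_le.2 hσk)), if_pos hk]

lemma slot_of_lt {k : ℕ} (hk : u < k) : slot n u σ k = 2 * n + 1 - k := by
  simp only [slot, if_neg (fun h : k ≤ u ∧ σ k ≤ u => absurd h.1 (not_le.2 hk)),
    if_neg (not_le.2 hk)]

lemma strictMonoOn_vertexKey (hσ : IsNoncrossingMatching n σ) (hu : u ≤ n) :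
    StrictMonoOn (vertexKey n u σ) (Set.Icc 1 u) := by
  rintro k ⟨hk, -⟩ k' ⟨-, hk'⟩ hkk'
  have hsub : {t ∈ Icc 1 u | u < σ t ∧ t < k} ⊆ {t ∈ Icc 1 u | u < σ t ∧ t < k'} :=
    monotone_filter_right _ fun t _ ht => ⟨ht.1, ht.2.trans hkk'⟩
  rw [vertexKey_lt_vertexKey_iff, region_of_le (hkk'.le.trans hk'), region_of_le hk']
  by_cases hmix : u < σ k
  · refine Or.inl (card_lt_card ⟨hsub, fun h => ?_⟩)
    have := mem_filter.1 (h (mem_filter.2 ⟨mem_Icc.2 ⟨hk, by omega⟩, hmix, hkk'⟩))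
    omega
  · rcases (card_le_card hsub).lt_or_eq with hlt | heq
    · exact Or.inl hlt
    · refine Or.inr ⟨heq, ?_⟩
      have := (hσ.mem k' (by omega) (by omega)).2
      rw [slot_of_le_of_le (by omega) (not_lt.1 hmix)]
      unfold slot
      split_ifs <;> omega

lemma strictAntiOn_vertexKey (hσ : IsNoncrossingMatching n σ) :
    StrictAntiOn (vertexKey n u σ) (Set.Ioc u n) := by
  rintro k ⟨hk, -⟩ k' ⟨-, hk'⟩ hkk'
  have hsub : {t ∈ Icc 1 u | u < σ t ∧ k' < σ t} ⊆ {t ∈ Icc 1 u | u < σ t ∧ k < σ t} :=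
    monotone_filter_right _ fun t _ ht => ⟨ht.1, hkk'.trans ht.2⟩
  rw [vertexKey_lt_vertexKey_iff, region_of_lt (hk.trans hkk'), region_of_lt hk]
  by_cases hmix : σ k' ≤ u
  · have hσk' := hσ.mem k' (by omega) hk'
    have hinv := hσ.invol k' (by omega) hk'
    refine Or.inl (card_lt_card ⟨hsub, fun h => ?_⟩)
    have := mem_filter.1 (h (mem_filter.2 ⟨mem_Icc.2 ⟨hσk'.1, hmix⟩, by omega, by omega⟩))
    omega
  · rcases (card_le_card hsub).lt_or_eq with hlt | heq
    · exact Or.inl hlt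
    · rw [slot_of_lt (hk.trans hkk'), slot_of_lt hk]
      exact Or.inr ⟨heq, by omega⟩

lemma vertexKey_apply_of_le_of_lt (hσ : IsNoncrossingMatching n σ) (hu : u ≤ n) {k : ℕ}
    (hk1 : 1 ≤ k) (hk : k ≤ u) (hσk : u < σ k) : vertexKey n u σ (σ k) = vertexKey n u σ k := by
  rw [vertexKey_eq_vertexKey_iff, region_of_lt hσk, region_of_le hk, slot_of_lt hσk,
    slot_of_le_of_lt hk hσk]
  -- the chords between the two sides are nested: `t` lies left of `k` iff `σ t` lies right of `σ k`
  refine ⟨congrArg card (filter_congr fun t ht => and_congr_right fun hσt => ?_), rfl⟩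
  simp only [mem_Icc] at ht
  constructor
  · intro h
    by_contra! hkt
    rcases hkt.lt_or_eq with hlt | rfl
    · exact hσ.noncrossing k t hk1 (by omega) hlt (by omega) h
    · omega
  · intro h
    by_contra! hσt
    rcases hσt.lt_or_eq with hlt | heq
    · exact hσ.noncrossing t k ht.1 (by omega) h (by omega) hlt
    · exact absurd (hσ.injOn ht.1 (by omega) hk1 (by omega) heq) (by omega)

lemma eq_or_of_vertexKey_eq (hσ : IsNoncrossingMatching n σ) (hu : u ≤ n) {k k' : ℕ}
    (hk1 : 1 ≤ k) (hkn : k ≤ n) (hk1' : 1 ≤ k') (hkn' : k' ≤ n)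
    (h : vertexKey n u σ k = vertexKey n u σ k') : k = k' ∨ σ k = k' ∧ (k ≤ u ↔ u < k') := by
  have hslot := (vertexKey_eq_vertexKey_iff.1 h).2
  have hσk := hσ.mem k hk1 hkn
  have hσk' := hσ.mem k' hk1' hkn'
  rcases lt_trichotomy k k' with hlt | heq | hlt
  · by_cases hku : k ≤ u <;> by_cases hku' : k' ≤ u
    · exact absurd h (strictMonoOn_vertexKey hσ hu ⟨hk1, by omega⟩ ⟨by omega, hku'⟩ hlt).ne
    · right
      rw [slot_of_lt (not_le.1 hku')] at hslot
      by_cases hmix : σ k ≤ u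
      · rw [slot_of_le_of_le hku hmix] at hslot
        omega
      · rw [slot_of_le_of_lt hku (not_le.1 hmix)] at hslot
        omega
    · omega
    · exact absurd h
        (strictAntiOn_vertexKey hσ ⟨not_le.1 hku, by omega⟩ ⟨by omega, hkn'⟩ hlt).ne'
  · exact Or.inl heq
  · by_cases hku : k ≤ u <;> by_cases hku' : k' ≤ u
    · exact absurd h (strictMonoOn_vertexKey hσ hu ⟨hk1', by omega⟩ ⟨by omega, hku⟩ hlt).ne'
    · omega
    · right
      rw [slot_of_lt (not_le.1 hku)] at hslot
      by_cases hmix : σ k' ≤ u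
      · rw [slot_of_le_of_le hku' hmix] at hslot
        omega
      · rw [slot_of_le_of_lt hku' (not_le.1 hmix)] at hslot
        have hσσ := hσ.invol k' hk1' hkn'
        refine ⟨?_, by omega⟩
        rw [← hσσ]
        congr 1
        omega
    · exact absurd h
        (strictAntiOn_vertexKey hσ ⟨not_le.1 hku', by omega⟩ ⟨by omega, hkn⟩ hlt).ne

lemma vertexKey_not_between_of_lower_chord (hσ : IsNoncrossingMatching n σ) (hu : u ≤ n) {l k : ℕ}
    (hl : l ≤ n) (hσl : u < σ l) (hlt : σ l < l) (hk1 : 1 ≤ k) (hk : k ≤ u)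
    (h1 : vertexKey n u σ l < vertexKey n u σ k) (h2 : vertexKey n u σ k < vertexKey n u σ (σ l)) :
    False := by
  have hinv := hσ.invol l (by omega) hl
  have hregion : region u σ (σ l) = region u σ l := by
    rw [region_of_lt hσl, region_of_lt (hσl.trans hlt)]
    refine congrArg card <| filter_congr fun t ht => and_congr_right fun hσt =>
      ⟨fun h => ?_, hlt.trans⟩
    simp only [mem_Icc] at ht
    by_contra! htl
    rcases htl.lt_or_eq with htl | htl
    · exact hσ.noncrossing t (σ l) ht.1 (by omega) (by omega) h (by rwa [hinv])
    · have := hσ.injOn (b := σ l) ht.1 (by omega) (by omega) (by omega) (by rw [htl, hinv])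
      omega
  rw [vertexKey_lt_vertexKey_iff'] at h1 h2
  have hslot1 := h1.2 (by omega)
  have hslot2 := h2.2 (by omega)
  rw [slot_of_lt (hσl.trans hlt)] at hslot1
  rw [slot_of_lt hσl] at hslot2
  by_cases hmix : σ k ≤ u
  · rw [slot_of_le_of_le hk hmix] at hslot1
    omega
  · rw [slot_of_le_of_lt hk (not_le.1 hmix)] at hslot1 hslot2
    exact hσ.noncrossing k (σ l) hk1 (by omega) (by omega) (by omega) (by rw [hinv]; omega)

lemma vertexKey_not_between_of_upper_chord (hσ : IsNoncrossingMatching n σ) {i l : ℕ}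
    (hi : 1 ≤ i) (hlt : i < σ i) (hσi : σ i ≤ u) (hl : u < l) (hln : l ≤ n)
    (h1 : vertexKey n u σ i < vertexKey n u σ l) (h2 : vertexKey n u σ l < vertexKey n u σ (σ i)) :
    False := by
  have hregion : region u σ (σ i) = region u σ i := by
    rw [region_of_le hσi, region_of_le (hlt.le.trans hσi)]
    refine congrArg card <| filter_congr fun t ht => and_congr_right fun hσt =>
      ⟨fun h => ?_, (·.trans hlt)⟩
    simp only [mem_Icc] at ht
    by_contra! hit
    rcases hit.lt_or_eq with hit | rfl
    · exact hσ.noncrossing i t hi (by omega) hit h (by omega)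
    · omega
  rw [vertexKey_lt_vertexKey_iff'] at h1 h2
  have hslot1 := h2.2 (by omega)
  rw [slot_of_lt hl, slot_of_le_of_le hσi (by rw [hσ.invol i hi (by omega)]; omega)] at hslot1
  omega

end VertexLayout

section VertexPositions

variable {n u : ℕ} {σ : ℕ → ℕ}

lemma exists_mem_vertexEnds_vertexKey_eq (hσ : IsNoncrossingMatching n σ) (hu : u ≤ n) {k : ℕ}
    (hk1 : 1 ≤ k) (hkn : k ≤ n) :
    ∃ v ∈ vertexEnds n u σ, vertexKey n u σ v = vertexKey n u σ k := by
  by_cases hk : k ≤ u ∨ u < σ k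
  · exact ⟨k, mem_filter.2 ⟨mem_Icc.2 ⟨hk1, hkn⟩, hk⟩, rfl⟩
  · simp only [not_or, not_le, not_lt] at hk
    have hσk := hσ.mem k hk1 hkn
    have hinv := hσ.invol k hk1 hkn
    refine ⟨σ k, mem_filter.2 ⟨mem_Icc.2 hσk, Or.inl hk.2⟩, ?_⟩
    have := vertexKey_apply_of_le_of_lt hσ hu hσk.1 hk.2 (by omega)
    rwa [hinv, eq_comm] at this

lemma vertexPos_le_vertexPos {a b : ℕ} (h : vertexKey n u σ a ≤ vertexKey n u σ b) :
    vertexPos n u σ a ≤ vertexPos n u σ b :=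
  card_filter_le_mono _ _ h

lemma vertexPos_lt_vertexPos (hσ : IsNoncrossingMatching n σ) (hu : u ≤ n) {a b : ℕ}
    (hb1 : 1 ≤ b) (hbn : b ≤ n) (h : vertexKey n u σ a < vertexKey n u σ b) :
    vertexPos n u σ a < vertexPos n u σ b := by
  obtain ⟨v, hv, hkey⟩ := exists_mem_vertexEnds_vertexKey_eq hσ hu hb1 hbn
  unfold vertexPos
  rw [← hkey] at h ⊢
  exact card_filter_le_lt _ _ hv h

lemma vertexKey_lt_of_vertexPos_lt {a b : ℕ} (h : vertexPos n u σ a < vertexPos n u σ b) :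
    vertexKey n u σ a < vertexKey n u σ b :=
  lt_of_not_ge fun h' => (vertexPos_le_vertexPos h').not_gt h

lemma vertexPos_mem_Icc (hσ : IsNoncrossingMatching n σ) (hu : u ≤ n) {k : ℕ} (hk1 : 1 ≤ k)
    (hkn : k ≤ n) : 1 ≤ vertexPos n u σ k ∧ vertexPos n u σ k ≤ numVertices n u σ := by
  obtain ⟨v, hv, hkey⟩ := exists_mem_vertexEnds_vertexKey_eq hσ hu hk1 hkn
  exact ⟨card_pos.2 ⟨v, mem_filter.2 ⟨hv, hkey.le⟩⟩, card_filter_le _ _⟩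

lemma strictMonoOn_vertexPos (hσ : IsNoncrossingMatching n σ) (hu : u ≤ n) :
    StrictMonoOn (vertexPos n u σ) (Set.Icc 1 u) := fun a ha b hb hab =>
  vertexPos_lt_vertexPos hσ hu (by have := ha.1; omega) (hb.2.trans hu)
    (strictMonoOn_vertexKey hσ hu ha hb hab)

lemma strictAntiOn_vertexPos (hσ : IsNoncrossingMatching n σ) (hu : u ≤ n) :
    StrictAntiOn (vertexPos n u σ) (Set.Ioc u n) := fun a ha _ hb hab =>
  vertexPos_lt_vertexPos hσ hu (by have := ha.1; omega) ha.2
    (strictAntiOn_vertexKey hσ ha hb hab)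

lemma vertexPos_apply_of_side_ne (hσ : IsNoncrossingMatching n σ) (hu : u ≤ n) {k : ℕ}
    (hk1 : 1 ≤ k) (hkn : k ≤ n) (hside : k ≤ u ↔ u < σ k) :
    vertexPos n u σ (σ k) = vertexPos n u σ k := by
  by_cases hk : k ≤ u
  · simp only [vertexPos, vertexKey_apply_of_le_of_lt hσ hu hk1 hk (hside.1 hk)]
  · have hσk := hσ.mem k hk1 hkn
    have hinv := hσ.invol k hk1 hkn
    have := vertexKey_apply_of_le_of_lt hσ hu hσk.1 (not_lt.1 (mt hside.2 hk)) (by omega)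
    rw [hinv] at this
    simp only [vertexPos, this]

lemma eq_or_of_vertexPos_eq (hσ : IsNoncrossingMatching n σ) (hu : u ≤ n) {k k' : ℕ}
    (hk1 : 1 ≤ k) (hkn : k ≤ n) (hk1' : 1 ≤ k') (hkn' : k' ≤ n)
    (h : vertexPos n u σ k = vertexPos n u σ k') : k = k' ∨ σ k = k' ∧ (k ≤ u ↔ u < k') := by
  refine eq_or_of_vertexKey_eq hσ hu hk1 hkn hk1' hkn' ?_
  rcases lt_trichotomy (vertexKey n u σ k) (vertexKey n u σ k') with hlt | heq | hlt
  · exact absurd h (vertexPos_lt_vertexPos hσ hu hk1' hkn' hlt).ne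
  · exact heq
  · exact absurd h (vertexPos_lt_vertexPos hσ hu hk1 hkn hlt).ne'

lemma exists_vertexPos_eq (hσ : IsNoncrossingMatching n σ) (hu : u ≤ n) {x : ℕ} (hx1 : 1 ≤ x)
    (hx : x ≤ numVertices n u σ) : ∃ k, 1 ≤ k ∧ k ≤ n ∧ vertexPos n u σ k = x := by
  have hsurj := surj_on_of_inj_on_of_card_le (s := vertexEnds n u σ)
    (t := Icc 1 (numVertices n u σ)) (fun v _ => vertexPos n u σ v) (fun v hv => ?_)
    (fun a b ha hb hab => ?_) (by rw [Nat.card_Icc, Nat.add_sub_cancel]; rfl)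
  · obtain ⟨k, hk, hkx⟩ := hsurj x (mem_Icc.2 ⟨hx1, hx⟩)
    have hk' := (mem_filter.1 hk).1
    rw [mem_Icc] at hk'
    exact ⟨k, hk'.1, hk'.2, hkx.symm⟩
  · simp only [vertexEnds, mem_filter, mem_Icc] at hv
    exact mem_Icc.2 (vertexPos_mem_Icc hσ hu hv.1.1 hv.1.2)
  · simp only [vertexEnds, mem_filter, mem_Icc] at ha hb
    rcases eq_or_of_vertexPos_eq hσ hu ha.1.1 ha.1.2 hb.1.1 hb.1.2 hab with h | ⟨hσa, hside⟩
    · exact h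
    · have := hσ.invol a ha.1.1 ha.1.2
      rw [hσa] at this
      omega

lemma numVertices_le (n u : ℕ) (σ : ℕ → ℕ) : numVertices n u σ ≤ n :=
  (card_filter_le _ _).trans (Nat.card_Icc 1 n).le

lemma numVertices_mod_two (hσ : IsNoncrossingMatching n σ) (hu : u ≤ n) :
    numVertices n u σ % 2 = u % 2 := by
  have hupper : {k ∈ vertexEnds n u σ | k ≤ u} = Icc 1 u := by
    ext k
    simp only [vertexEnds, mem_filter, mem_Icc]
    omega
  have hlower : Even #{k ∈ vertexEnds n u σ | ¬ k ≤ u} := by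
    refine even_card_of_involution σ (fun k hk => ?_) (fun k hk => ?_) (fun k hk => ?_) <;>
      simp only [vertexEnds, mem_filter, mem_Icc] at hk ⊢
    · have := hσ.mem k hk.1.1.1 hk.1.1.2
      have := hσ.invol k hk.1.1.1 hk.1.1.2
      omega
    · exact hσ.invol k hk.1.1.1 hk.1.1.2
    · exact hσ.ne k hk.1.1.1 hk.1.1.2
  rw [numVertices, ← card_filter_add_card_filter_not (· ≤ u), hupper, Nat.card_Icc]
  have := Nat.even_iff.1 hlower
  omega

end VertexPositions

section Partner

variable {N n u : ℕ} {σ : ℕ → ℕ}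

lemma exists_vertexPos_eq_of_mem (hσ : IsNoncrossingMatching n σ) (hu : u ≤ n) {x : ℤ}
    (hx1 : 1 ≤ x) (hx : x ≤ numVertices n u σ) :
    ∃ k, 1 ≤ k ∧ k ≤ n ∧ (vertexPos n u σ k : ℤ) = x := by
  obtain ⟨k, hk1, hkn, hkx⟩ := exists_vertexPos_eq hσ hu (x := x.toNat) (by omega) (by omega)
  exact ⟨k, hk1, hkn, by omega⟩

noncomputable def endAt (n u : ℕ) (σ : ℕ → ℕ) (x : ℤ) : ℕ :=
  if h : ∃ k, 1 ≤ k ∧ k ≤ n ∧ (vertexPos n u σ k : ℤ) = x then h.choose else 0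

lemma endAt_spec (hσ : IsNoncrossingMatching n σ) (hu : u ≤ n) {x : ℤ} (hx1 : 1 ≤ x)
    (hx : x ≤ numVertices n u σ) :
    1 ≤ endAt n u σ x ∧ endAt n u σ x ≤ n ∧ (vertexPos n u σ (endAt n u σ x) : ℤ) = x := by
  have h := exists_vertexPos_eq_of_mem hσ hu hx1 hx
  rw [endAt, dif_pos h]
  exact h.choose_spec

/-- The partner of the vertex `x` in the half-plane where the chords between two ends of the side
`S` are drawn; the vertices beyond the last end are paired consecutively. -/
noncomputable def partner (n u : ℕ) (σ : ℕ → ℕ) (S : ℕ → Prop) (x : ℤ) : ℤ :=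
  if x ≤ numVertices n u σ then
    if S (endAt n u σ x) ∧ S (σ (endAt n u σ x)) then vertexPos n u σ (σ (endAt n u σ x)) else x
  else if (x - numVertices n u σ) % 2 = 1 then x + 1 else x - 1

variable {S : ℕ → Prop}

lemma partner_vertexPos (hσ : IsNoncrossingMatching n σ) (hu : u ≤ n) {k : ℕ} (hk1 : 1 ≤ k)
    (hkn : k ≤ n) : partner n u σ S (vertexPos n u σ k) =
      if S k ∧ S (σ k) then (vertexPos n u σ (σ k) : ℤ) else vertexPos n u σ k := by
  have hmem := vertexPos_mem_Icc hσ hu hk1 hkn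
  obtain ⟨h1, h2, h3⟩ := endAt_spec hσ hu (x := vertexPos n u σ k) (by omega) (by omega)
  rw [partner, if_pos (by omega)]
  -- at a vertex shared by the ends `k` and `σ k`, either choice of `endAt` gives the same value
  rcases eq_or_of_vertexPos_eq hσ hu hk1 hkn h1 h2 (by omega) with hk | ⟨hσk, -⟩
  · rw [← hk]
  · have hinv := hσ.invol k hk1 hkn
    rw [← hσk, hinv, h3.symm, ← hσk]
    by_cases hS : S k ∧ S (σ k)
    · rw [if_pos hS.symm, if_pos hS]
    · rw [if_neg (fun h => hS h.symm), if_neg hS]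

lemma partner_of_lt {x : ℤ} (hx : numVertices n u σ < x) :
    partner n u σ S x = if (x - numVertices n u σ) % 2 = 1 then x + 1 else x - 1 := by
  rw [partner, if_neg (not_le.2 hx)]

lemma partner_mem_Icc (hσ : IsNoncrossingMatching n σ) (hu : u ≤ n) (hnN : n ≤ N)
    (hpar : N % 2 = numVertices n u σ % 2) {x : ℤ} (hx1 : 1 ≤ x) (hxN : x ≤ N) :
    1 ≤ partner n u σ S x ∧ partner n u σ S x ≤ N := by
  have hm := numVertices_le n u σ
  by_cases hx : x ≤ numVertices n u σ
  · obtain ⟨k, hk1, hkn, rfl⟩ := exists_vertexPos_eq_of_mem hσ hu hx1 hx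
    have hσk := hσ.mem k hk1 hkn
    have := vertexPos_mem_Icc hσ hu hσk.1 hσk.2
    rw [partner_vertexPos hσ hu hk1 hkn]
    split_ifs <;> omega
  · rw [partner_of_lt (not_le.1 hx)]
    split_ifs <;> omega

lemma partner_partner (hσ : IsNoncrossingMatching n σ) (hu : u ≤ n) {x : ℤ} (hx1 : 1 ≤ x) :
    partner n u σ S (partner n u σ S x) = x := by
  by_cases hx : x ≤ numVertices n u σ
  · obtain ⟨k, hk1, hkn, rfl⟩ := exists_vertexPos_eq_of_mem hσ hu hx1 hx
    have hσk := hσ.mem k hk1 hkn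
    rw [partner_vertexPos hσ hu hk1 hkn]
    by_cases hS : S k ∧ S (σ k)
    · rw [if_pos hS, partner_vertexPos hσ hu hσk.1 hσk.2, hσ.invol k hk1 hkn, if_pos hS.symm]
    · rw [if_neg hS, partner_vertexPos hσ hu hk1 hkn, if_neg hS]
  · rw [partner_of_lt (not_le.1 hx)]
    split_ifs with hodd
    · rw [partner_of_lt (by omega), if_neg (by omega)]
      ring
    · rw [partner_of_lt (by omega), if_pos (by omega)]
      ring

lemma partner_eq_self_iff (hσ : IsNoncrossingMatching n σ) (hu : u ≤ n)
    (hS : ∀ k k', (S k ↔ S k') ↔ (k ≤ u ↔ k' ≤ u)) {x : ℤ} (hx1 : 1 ≤ x) :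
    partner n u σ S x = x ↔ ∃ e, 1 ≤ e ∧ e ≤ n ∧ ¬ S e ∧ (vertexPos n u σ e : ℤ) = x := by
  constructor
  · intro hfix
    by_cases hx : x ≤ numVertices n u σ
    · obtain ⟨k, hk1, hkn, rfl⟩ := exists_vertexPos_eq_of_mem hσ hu hx1 hx
      have hσk := hσ.mem k hk1 hkn
      rw [partner_vertexPos hσ hu hk1 hkn] at hfix
      by_cases hSk : S k
      · by_cases hSσk : S (σ k)
        · rw [if_pos ⟨hSk, hSσk⟩, Nat.cast_inj] at hfix
          rcases eq_or_of_vertexPos_eq hσ hu hσk.1 hσk.2 hk1 hkn hfix with h | ⟨h, hside⟩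
          · exact absurd h (hσ.ne k hk1 hkn)
          · have := (hS k (σ k)).1 (iff_of_true hSk hSσk)
            omega
        · refine ⟨σ k, hσk.1, hσk.2, hSσk, ?_⟩
          rw [vertexPos_apply_of_side_ne hσ hu hk1 hkn]
          have := (hS k (σ k)).not.1 fun h => hSσk (h.1 hSk)
          omega
      · exact ⟨k, hk1, hkn, hSk, rfl⟩
    · rw [partner_of_lt (not_le.1 hx)] at hfix
      split_ifs at hfix <;> omega
  · rintro ⟨e, he1, hen, hSe, rfl⟩
    rw [partner_vertexPos hσ hu he1 hen, if_neg fun h => hSe h.1]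

end Partner

section PartnerDiagram

variable {N n u : ℕ} {σ : ℕ → ℕ} {S : ℕ → Prop}

lemma exists_of_lt_partner (hσ : IsNoncrossingMatching n σ) (hu : u ≤ n) {x y : ℤ} (hx1 : 1 ≤ x)
    (hxy : x < y) (hy : y < partner n u σ S x) :
    ∃ a, 1 ≤ a ∧ a ≤ n ∧ S a ∧ S (σ a) ∧ (vertexPos n u σ a : ℤ) = x ∧
      partner n u σ S x = vertexPos n u σ (σ a) := by
  by_cases hx : x ≤ numVertices n u σ
  · obtain ⟨a, ha1, han, rfl⟩ := exists_vertexPos_eq_of_mem hσ hu hx1 hx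
    rw [partner_vertexPos hσ hu ha1 han] at hy ⊢
    by_cases hSa : S a ∧ S (σ a)
    · rw [if_pos hSa]
      exact ⟨a, ha1, han, hSa.1, hSa.2, rfl, rfl⟩
    · rw [if_neg hSa] at hy
      omega
  · rw [partner_of_lt (not_le.1 hx)] at hy
    split_ifs at hy <;> omega

lemma vertexPos_injOn (hσ : IsNoncrossingMatching n σ) (hu : u ≤ n)
    (hS : ∀ k k', (S k ↔ S k') ↔ (k ≤ u ↔ k' ≤ u)) {k k' : ℕ} (hk1 : 1 ≤ k) (hkn : k ≤ n)
    (hSk : ¬ S k) (hk1' : 1 ≤ k') (hkn' : k' ≤ n) (hSk' : ¬ S k')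
    (h : vertexPos n u σ k = vertexPos n u σ k') : k = k' := by
  rcases eq_or_of_vertexPos_eq hσ hu hk1 hkn hk1' hkn' h with h | ⟨-, hside⟩
  · exact h
  · have := (hS k k').1 (iff_of_false hSk hSk')
    omega

theorem isArcDiagram_partner (hσ : IsNoncrossingMatching n σ) (hu : u ≤ n) (hnN : n ≤ N)
    (hpar : N % 2 = numVertices n u σ % 2) (hS : ∀ k k', (S k ↔ S k') ↔ (k ≤ u ↔ k' ≤ u))
    {L : Set ℤ}
    (hcross : ∀ a b, 1 ≤ a → a ≤ n → 1 ≤ b → b ≤ n → S a → S (σ a) → S b → S (σ b) →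
      vertexPos n u σ a < vertexPos n u σ b → vertexPos n u σ b < vertexPos n u σ (σ a) →
      vertexPos n u σ (σ a) < vertexPos n u σ (σ b) → False)
    (hcover : ∀ a k, 1 ≤ a → a ≤ n → 1 ≤ k → k ≤ n → S a → S (σ a) → ¬ S k →
      vertexPos n u σ a < vertexPos n u σ k → vertexPos n u σ k < vertexPos n u σ (σ a) → False)
    (hleft : ∀ a b, 1 ≤ a → a ≤ n → 1 ≤ b → b ≤ n → ¬ S a → ¬ S b →
      (vertexPos n u σ a : ℤ) ∈ L → (vertexPos n u σ b : ℤ) ∉ L →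
      vertexPos n u σ a < vertexPos n u σ b) :
    IsArcDiagram N (partner n u σ S) L where
  mapsTo _ hx1 hxN := partner_mem_Icc hσ hu hnN hpar hx1 hxN
  invol _ hx1 := partner_partner hσ hu hx1
  noncrossing x y hx1 hxy hyx hxy' := by
    obtain ⟨a, ha1, han, hSa, hSσa, rfl, hπx⟩ := exists_of_lt_partner hσ hu hx1 hxy hyx
    obtain ⟨b, hb1, hbn, hSb, hSσb, rfl, hπy⟩ :=
      exists_of_lt_partner hσ hu (by omega) hyx (y := partner n u σ S _) hxy'
    rw [hπx, hπy] at hxy'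
    rw [hπx] at hyx
    exact hcross a b ha1 han hb1 hbn hSa hSσa hSb hSσb (by omega) (by omega) (by omega)
  not_fixed_of_covered x d hx1 hxd hdx hd := by
    obtain ⟨a, ha1, han, hSa, hSσa, rfl, hπx⟩ := exists_of_lt_partner hσ hu hx1 hxd hdx
    obtain ⟨e, he1, hen, hSe, rfl⟩ := (partner_eq_self_iff hσ hu hS (by omega)).1 hd
    rw [hπx] at hdx
    exact hcover a e ha1 han he1 hen hSa hSσa hSe (by omega) (by omega)
  left_lt_right a b ha1 hb1 ha hb haL hbL := by
    obtain ⟨e, he1, hen, hSe, rfl⟩ := (partner_eq_self_iff hσ hu hS ha1).1 ha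
    obtain ⟨e', he1', hen', hSe', rfl⟩ := (partner_eq_self_iff hσ hu hS hb1).1 hb
    exact_mod_cast hleft e e' he1 hen he1' hen' hSe hSe' haL hbL

end PartnerDiagram

section Configuration

variable {N n u : ℕ} {σ : ℕ → ℕ}

noncomputable def vertexSet (n u : ℕ) (σ : ℕ → ℕ) (a b : ℕ) : Finset ℤ :=
  (Icc a b).image fun k => (vertexPos n u σ k : ℤ)

lemma mem_vertexSet {a b : ℕ} {x : ℤ} :
    x ∈ vertexSet n u σ a b ↔ ∃ k, a ≤ k ∧ k ≤ b ∧ (vertexPos n u σ k : ℤ) = x := by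
  simp only [vertexSet, mem_image, mem_Icc, and_assoc]

variable {S : ℕ → Prop}

-- `L` is a variable so that `x ∈ L` is decided as in `IsArcDiagram.filter_matched_left`.
lemma filter_partner_eq_self_mem (hσ : IsNoncrossingMatching n σ) (hu : u ≤ n) (hnN : n ≤ N)
    (hS : ∀ k k', (S k ↔ S k') ↔ (k ≤ u ↔ k' ≤ u)) {a b : ℕ}
    (hab : ∀ k, a ≤ k → k ≤ b → 1 ≤ k ∧ k ≤ n ∧ ¬ S k) {L : Set ℤ}
    (hL : L = vertexSet n u σ a b) :
    {x ∈ Icc (1 : ℤ) N | partner n u σ S x = x ∧ x ∈ L} = vertexSet n u σ a b := by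
  subst hL
  ext x
  simp only [mem_filter, mem_Icc, Finset.mem_coe]
  refine ⟨fun h => h.2.2, fun hx => ?_⟩
  obtain ⟨k, hak, hkb, rfl⟩ := mem_vertexSet.1 hx
  obtain ⟨hk1, hkn, hSk⟩ := hab k hak hkb
  have := vertexPos_mem_Icc hσ hu hk1 hkn
  have := numVertices_le n u σ
  exact ⟨⟨by omega, by omega⟩,
    (partner_eq_self_iff hσ hu hS (by omega)).2 ⟨k, hk1, hkn, hSk, rfl⟩, hx⟩

lemma filter_partner_eq_self_notMem (hσ : IsNoncrossingMatching n σ) (hu : u ≤ n)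
    (hnN : n ≤ N) (hS : ∀ k k', (S k ↔ S k') ↔ (k ≤ u ↔ k' ≤ u)) {a b a' b' : ℕ}
    (hab : ∀ k, a ≤ k → k ≤ b → 1 ≤ k ∧ k ≤ n ∧ ¬ S k)
    (hcompl : ∀ k, a' ≤ k ∧ k ≤ b' ↔ 1 ≤ k ∧ k ≤ n ∧ ¬ S k ∧ ¬ (a ≤ k ∧ k ≤ b)) {L : Set ℤ}
    (hL : L = vertexSet n u σ a b) :
    {x ∈ Icc (1 : ℤ) N | partner n u σ S x = x ∧ x ∉ L} = vertexSet n u σ a' b' := by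
  subst hL
  ext x
  simp only [mem_filter, mem_Icc, Finset.mem_coe, mem_vertexSet, not_exists, not_and]
  constructor
  · rintro ⟨hx, hfix, hxL⟩
    obtain ⟨e, he1, hen, hSe, rfl⟩ := (partner_eq_self_iff hσ hu hS hx.1).1 hfix
    have he := (hcompl e).2 ⟨he1, hen, hSe, fun h => hxL e h.1 h.2 rfl⟩
    exact ⟨e, he.1, he.2, rfl⟩
  · rintro ⟨e, he, he', rfl⟩
    obtain ⟨he1, hen, hSe, hab'⟩ := (hcompl e).1 ⟨he, he'⟩
    have := vertexPos_mem_Icc hσ hu he1 hen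
    have := numVertices_le n u σ
    refine ⟨⟨by omega, by omega⟩, (partner_eq_self_iff hσ hu hS (by omega)).2
      ⟨e, he1, hen, hSe, rfl⟩, fun k hak hkb hk => hab' ⟨?_, ?_⟩⟩ <;>
    · obtain ⟨hk1, hkn, hSk⟩ := hab k hak hkb
      have := vertexPos_injOn hσ hu hS hk1 hkn hSk he1 hen hSe (by exact_mod_cast hk)
      omega

lemma card_vertexSet (hσ : IsNoncrossingMatching n σ) (hu : u ≤ n)
    (hS : ∀ k k', (S k ↔ S k') ↔ (k ≤ u ↔ k' ≤ u)) {a b : ℕ}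
    (hab : ∀ k, a ≤ k → k ≤ b → 1 ≤ k ∧ k ≤ n ∧ ¬ S k) : #(vertexSet n u σ a b) = b + 1 - a := by
  rw [vertexSet, card_image_of_injOn, Nat.card_Icc]
  intro k hk k' hk' h
  simp only [coe_Icc, Set.mem_Icc] at hk hk'
  obtain ⟨hk1, hkn, hSk⟩ := hab k hk.1 hk.2
  obtain ⟨hk1', hkn', hSk'⟩ := hab k' hk'.1 hk'.2
  exact vertexPos_injOn hσ hu hS hk1 hkn hSk hk1' hkn' hSk' (by simpa using h)

lemma side_iff_lower (u k k' : ℕ) : ((u < k) ↔ (u < k')) ↔ (k ≤ u ↔ k' ≤ u) := by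
  simp only [← not_le, not_iff_not]

theorem isArcDiagram_upper (hσ : IsNoncrossingMatching n σ) (hu : u ≤ n) (hnN : n ≤ N)
    (hpar : N % 2 = numVertices n u σ % 2) {ap : ℕ} (hap : ap ≤ u) :
    IsArcDiagram N (partner n u σ (u < ·)) (vertexSet n u σ 1 ap) := by
  have hanti := strictAntiOn_vertexPos hσ hu
  have hmono := strictMonoOn_vertexPos hσ hu
  refine isArcDiagram_partner hσ hu hnN hpar (side_iff_lower u)
    (fun a b ha1 han hb1 hbn hSa hSσa hSb hSσb h1 h2 h3 => ?_)
    (fun a k ha1 han hk1 hkn hSa hSσa hSk h1 h2 => ?_)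
    (fun a b ha1 han hb1 hbn hSa hSb haL hbL => ?_)
  · have hσa := hσ.mem a ha1 han
    have hσb := hσ.mem b hb1 hbn
    exact hσ.noncrossing_rev han hb1 ((hanti.lt_iff_gt ⟨hSσa, hσa.2⟩ ⟨hSσb, hσb.2⟩).1 h3)
      ((hanti.lt_iff_gt ⟨hSb, hbn⟩ ⟨hSσa, hσa.2⟩).1 h2)
      ((hanti.lt_iff_gt ⟨hSa, han⟩ ⟨hSb, hbn⟩).1 h1)
  · have hσa := hσ.mem a ha1 han
    have hlt : σ a < a := (hanti.lt_iff_gt ⟨hSa, han⟩ ⟨hSσa, hσa.2⟩).1 (h1.trans h2)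
    exact vertexKey_not_between_of_lower_chord hσ hu han hSσa hlt hk1 (not_lt.1 hSk)
      (vertexKey_lt_of_vertexPos_lt h1) (vertexKey_lt_of_vertexPos_lt h2)
  · obtain ⟨a', ha', ha'ap, ha'a⟩ := mem_vertexSet.1 haL
    have := hmono.injOn ⟨by omega, by omega⟩ ⟨ha1, not_lt.1 hSa⟩ (by exact_mod_cast ha'a)
    have hb : ap < b := not_le.1 fun hb => hbL (mem_vertexSet.2 ⟨b, hb1, hb, rfl⟩)
    exact hmono ⟨ha1, not_lt.1 hSa⟩ ⟨hb1, not_lt.1 hSb⟩ (by omega)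

theorem isArcDiagram_lower (hσ : IsNoncrossingMatching n σ) (hu : u ≤ n) (hnN : n ≤ N)
    (hpar : N % 2 = numVertices n u σ % 2) {c : ℕ} (hc : u ≤ c) :
    IsArcDiagram N (partner n u σ (· ≤ u)) (vertexSet n u σ (c + 1) n) := by
  have hanti := strictAntiOn_vertexPos hσ hu
  have hmono := strictMonoOn_vertexPos hσ hu
  refine isArcDiagram_partner hσ hu hnN hpar (fun _ _ => Iff.rfl)
    (fun a b ha1 han hb1 hbn hSa hSσa hSb hSσb h1 h2 h3 => ?_)
    (fun a k ha1 han hk1 hkn hSa hSσa hSk h1 h2 => ?_)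
    (fun a b ha1 han hb1 hbn hSa hSb haL hbL => ?_)
  · have hσa := hσ.mem a ha1 han
    have hσb := hσ.mem b hb1 hbn
    exact hσ.noncrossing a b ha1 hbn ((hmono.lt_iff_lt ⟨ha1, hSa⟩ ⟨hb1, hSb⟩).1 h1)
      ((hmono.lt_iff_lt ⟨hb1, hSb⟩ ⟨hσa.1, hSσa⟩).1 h2)
      ((hmono.lt_iff_lt ⟨hσa.1, hSσa⟩ ⟨hσb.1, hSσb⟩).1 h3)
  · have hσa := hσ.mem a ha1 han
    have hlt : a < σ a := (hmono.lt_iff_lt ⟨ha1, hSa⟩ ⟨hσa.1, hSσa⟩).1 (h1.trans h2)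
    exact vertexKey_not_between_of_upper_chord hσ ha1 hlt hSσa (not_le.1 hSk) hkn
      (vertexKey_lt_of_vertexPos_lt h1) (vertexKey_lt_of_vertexPos_lt h2)
  · obtain ⟨a', ha', ha'n, ha'a⟩ := mem_vertexSet.1 haL
    have := hanti.injOn ⟨by omega, ha'n⟩ ⟨not_le.1 hSa, han⟩ (by exact_mod_cast ha'a)
    have hb : b ≤ c := not_lt.1 fun hb => hbL (mem_vertexSet.2 ⟨b, hb, hbn, rfl⟩)
    exact hanti ⟨not_le.1 hSb, hbn⟩ ⟨not_le.1 hSa, han⟩ (by omega)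

end Configuration

section Realisation

variable {N n u : ℕ} {σ : ℕ → ℕ} {ap c : ℕ}

/-- The upper (resp. lower) sequence is the word of the upper (resp. lower) arc diagram; the
ends `1, …, ap` are top-left, `ap + 1, …, u` top-right, `u + 1, …, c` bottom-right and
`c + 1, …, n` bottom-left. -/
noncomputable def configuration (n u : ℕ) (σ : ℕ → ℕ) (ap c : ℕ) : ℤ → ℤ × ℤ := fun x =>
  (arcWord (partner n u σ (u < ·)) (vertexSet n u σ 1 ap) x,
    arcWord (partner n u σ (· ≤ u)) (vertexSet n u σ (c + 1) n) x)

variable (hσ : IsNoncrossingMatching n σ) (hu : u ≤ n) (hnN : n ≤ N)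
  (hpar : N % 2 = numVertices n u σ % 2)
include hσ hu hnN hpar

lemma UL_configuration (hap : ap ≤ u) : UL N (configuration n u σ ap c) = vertexSet n u σ 1 ap :=
  (isArcDiagram_upper hσ hu hnN hpar hap).filter_matched_left.trans <|
    filter_partner_eq_self_mem hσ hu hnN (S := (u < ·)) (side_iff_lower u) (a := 1) (b := ap)
      (fun _ h1 h2 => by omega) rfl

lemma UR_configuration (hap : ap ≤ u) :
    UR N (configuration n u σ ap c) = vertexSet n u σ (ap + 1) u :=
  (isArcDiagram_upper hσ hu hnN hpar hap).filter_matched_right.trans <|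
    filter_partner_eq_self_notMem hσ hu hnN (S := (u < ·)) (side_iff_lower u) (a := 1) (b := ap)
      (a' := ap + 1) (b' := u) (fun _ h1 h2 => by omega) (fun _ => by omega) rfl

lemma LL_configuration (hc : u ≤ c) :
    LL N (configuration n u σ ap c) = vertexSet n u σ (c + 1) n :=
  (isArcDiagram_lower hσ hu hnN hpar hc).filter_matched_left.trans <|
    filter_partner_eq_self_mem hσ hu hnN (S := (· ≤ u)) (fun _ _ => Iff.rfl) (a := c + 1) (b := n)
      (fun _ h1 h2 => by omega) rfl

lemma LR_configuration (hc : u ≤ c) (hcn : c ≤ n) :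
    LR N (configuration n u σ ap c) = vertexSet n u σ (u + 1) c :=
  (isArcDiagram_lower hσ hu hnN hpar hc).filter_matched_right.trans <|
    filter_partner_eq_self_notMem hσ hu hnN (S := (· ≤ u)) (fun _ _ => Iff.rfl) (a := c + 1)
      (b := n) (a' := u + 1) (b' := c) (fun _ h1 h2 => by omega) (fun _ => by omega) rfl

lemma endsList_configuration (hap : ap ≤ u) (hc : u ≤ c) (hcn : c ≤ n) :
    endsList N (configuration n u σ ap c) =
      (List.range' 1 n).map fun k => (vertexPos n u σ k : ℤ) := by
  have hmono : StrictMonoOn (fun k => (vertexPos n u σ k : ℤ)) (Set.Icc 1 u) :=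
    fun k hk k' hk' h => Nat.cast_lt.2 (strictMonoOn_vertexPos hσ hu hk hk' h)
  have hanti : StrictAntiOn (fun k => (vertexPos n u σ k : ℤ)) (Set.Ioc u n) :=
    fun k hk k' hk' h => Nat.cast_lt.2 (strictAntiOn_vertexPos hσ hu hk hk' h)
  rw [endsList, UL_configuration hσ hu hnN hpar hap, UR_configuration hσ hu hnN hpar hap,
    LR_configuration hσ hu hnN hpar hc hcn, LL_configuration hσ hu hnN hpar hc, vertexSet,
    vertexSet, vertexSet, vertexSet,
    sort_image_Icc_of_strictMonoOn (hmono.mono fun k hk => ⟨hk.1, hk.2.trans hap⟩),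
    sort_image_Icc_of_strictMonoOn (hmono.mono fun k hk => ⟨by have := hk.1; omega, hk.2⟩),
    sort_image_Icc_of_strictAntiOn
      (hanti.mono fun k hk => ⟨by have := hk.1; omega, hk.2.trans hcn⟩),
    sort_image_Icc_of_strictAntiOn (hanti.mono fun k hk => ⟨by have := hk.1; omega, hk.2⟩),
    List.reverse_reverse, List.reverse_reverse, ← List.map_append, ← List.map_append,
    ← List.map_append, range'_append_range' (by omega) hap, range'_append_range' (by omega) hc,
    range'_append_range' (by omega) hcn, Nat.add_sub_cancel]

lemma endPoint_configuration (hap : ap ≤ u) (hc : u ≤ c) (hcn : c ≤ n) {k : ℕ} (hk1 : 1 ≤ k)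
    (hkn : k ≤ n) : endPoint N (configuration n u σ ap c) k = vertexPos n u σ k := by
  rw [endPoint, endsList_configuration hσ hu hnN hpar hap hc hcn,
    List.getD_eq_getElem _ _ (by simp only [List.length_map, List.length_range']; omega),
    List.getElem_map, List.getElem_range', show 1 + 1 * (k - 1) = k by omega]

lemma card_UL_configuration (hap : ap ≤ u) : #(UL N (configuration n u σ ap c)) = ap := by
  rw [UL_configuration hσ hu hnN hpar hap, card_vertexSet hσ hu (S := (u < ·)) (side_iff_lower u)
    fun _ h1 h2 => by omega, Nat.add_sub_cancel]

lemma card_UR_configuration (hap : ap ≤ u) : #(UR N (configuration n u σ ap c)) = u - ap := by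
  rw [UR_configuration hσ hu hnN hpar hap, card_vertexSet hσ hu (S := (u < ·)) (side_iff_lower u)
    fun _ h1 h2 => by omega, Nat.add_sub_add_right]

lemma card_LL_configuration (hc : u ≤ c) : #(LL N (configuration n u σ ap c)) = n - c := by
  rw [LL_configuration hσ hu hnN hpar hc, card_vertexSet hσ hu (S := (· ≤ u)) (fun _ _ => Iff.rfl)
    fun _ h1 h2 => by omega, Nat.add_sub_add_right]

lemma card_LR_configuration (hc : u ≤ c) (hcn : c ≤ n) :
    #(LR N (configuration n u σ ap c)) = c - u := by
  rw [LR_configuration hσ hu hnN hpar hc hcn, card_vertexSet hσ hu (S := (· ≤ u))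
    (fun _ _ => Iff.rfl) fun _ h1 h2 => by omega, Nat.add_sub_add_right]

/-- A chord of `σ` is realised by an arc of the lower (resp. upper) diagram when both its ends are
upper (resp. lower) ends, and by a single vertex otherwise. -/
lemma insideReach_configuration (hap : ap ≤ u) (hc : u ≤ c) {k : ℕ} (hk1 : 1 ≤ k) (hkn : k ≤ n) :
    InsideReach N (configuration n u σ ap c) (vertexPos n u σ k) (vertexPos n u σ (σ k)) := by
  have hσk := hσ.mem k hk1 hkn
  have hmem : ∀ j, 1 ≤ j → j ≤ n → (vertexPos n u σ j : ℤ) ∈ Set.Icc (1 : ℤ) N := fun j h1 h2 => by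
    have := vertexPos_mem_Icc hσ hu h1 h2
    have := numVertices_le n u σ
    simp only [Set.mem_Icc]
    omega
  by_cases hside : k ≤ u ↔ u < σ k
  · rw [vertexPos_apply_of_side_ne hσ hu hk1 hkn hside]
    exact Relation.ReflTransGen.refl
  refine Relation.ReflTransGen.single ⟨hmem k hk1 hkn, hmem _ hσk.1 hσk.2, ?_⟩
  have hne : (vertexPos n u σ (σ k) : ℤ) ≠ vertexPos n u σ k := fun h => by
    rcases eq_or_of_vertexPos_eq hσ hu hσk.1 hσk.2 hk1 hkn (by exact_mod_cast h) with h' | h'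
    · exact hσ.ne k hk1 hkn h'
    · rw [hσ.invol k hk1 hkn] at h'
      omega
  by_cases hk : u < k
  · have hπ : partner n u σ (u < ·) (vertexPos n u σ k) = vertexPos n u σ (σ k) := by
      rw [partner_vertexPos hσ hu hk1 hkn, if_pos ⟨hk, by omega⟩]
    have := (isArcDiagram_upper hσ hu hnN hpar hap).matchedSym (hmem k hk1 hkn).1
      (hmem k hk1 hkn).2 (by rwa [hπ])
    rw [hπ] at this
    exact Or.inl this
  · have hπ : partner n u σ (· ≤ u) (vertexPos n u σ k) = vertexPos n u σ (σ k) := by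
      rw [partner_vertexPos hσ hu hk1 hkn, if_pos ⟨not_lt.1 hk, by omega⟩]
    have := (isArcDiagram_lower hσ hu hnN hpar hc).matchedSym (hmem k hk1 hkn).1
      (hmem k hk1 hkn).2 (by rwa [hπ])
    rw [hπ] at this
    exact Or.inr this

end Realisation

theorem realisation_of_noncrossing_matching_general
    (N : ℕ) (ap bp an bn : ℕ)
    (hpar1 : (ap + bp) % 2 = N % 2)
    (hle : ap + bp + an + bn ≤ N)
    (σ : ℕ → ℕ)
    (hmaps : ∀ i ∈ Finset.Icc 1 (ap + bp + an + bn), σ i ∈ Finset.Icc 1 (ap + bp + an + bn))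
    (hinv : ∀ i ∈ Finset.Icc 1 (ap + bp + an + bn), σ (σ i) = i)
    (hfix : ∀ i ∈ Finset.Icc 1 (ap + bp + an + bn), σ i ≠ i)
    (hnc : ¬ ∃ i ∈ Finset.Icc 1 (ap + bp + an + bn), ∃ j ∈ Finset.Icc 1 (ap + bp + an + bn),
      i < j ∧ j < σ i ∧ σ i < σ j) :
    ∃ η : ℤ → ℤ × ℤ,
      (∀ x ∈ Finset.Icc (1 : ℤ) N,
        ((η x).1 = 1 ∨ (η x).1 = -1) ∧ ((η x).2 = 1 ∨ (η x).2 = -1)) ∧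
      (UL N η).card = ap ∧ (UR N η).card = bp ∧
      (LL N η).card = an ∧ (LR N η).card = bn ∧
      ∀ k ∈ Finset.Icc 1 (ap + bp + an + bn),
        InsideReach N η (endPoint N η k) (endPoint N η (σ k)) := by
  have hσ : IsNoncrossingMatching (ap + bp + an + bn) σ :=
    ⟨fun i h1 h2 => mem_Icc.1 (hmaps i (mem_Icc.2 ⟨h1, h2⟩)),
      fun i h1 h2 => hinv i (mem_Icc.2 ⟨h1, h2⟩), fun i h1 h2 => hfix i (mem_Icc.2 ⟨h1, h2⟩),
      fun i j hi hj hij h1 h2 =>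
        hnc ⟨i, mem_Icc.2 ⟨hi, by omega⟩, j, mem_Icc.2 ⟨by omega, hj⟩, hij, h1, h2⟩⟩
  have hu : ap + bp ≤ ap + bp + an + bn := by omega
  have hpar : N % 2 = numVertices (ap + bp + an + bn) (ap + bp) σ % 2 := by
    have := numVertices_mod_two hσ hu
    omega
  have hap : ap ≤ ap + bp := by omega
  have hc : ap + bp ≤ ap + bp + bn := by omega
  have hcn : ap + bp + bn ≤ ap + bp + an + bn := by omega
  refine ⟨configuration (ap + bp + an + bn) (ap + bp) σ ap (ap + bp + bn),
    fun x _ => ⟨arcWord_eq_one_or _ _ x, arcWord_eq_one_or _ _ x⟩,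
    card_UL_configuration hσ hu hle hpar hap,
    (card_UR_configuration hσ hu hle hpar hap).trans (by omega),
    (card_LL_configuration hσ hu hle hpar hc).trans (by omega),
    (card_LR_configuration hσ hu hle hpar hc hcn).trans (by omega), fun k hk => ?_⟩
  have hσk := hσ.mem k (mem_Icc.1 hk).1 (mem_Icc.1 hk).2
  rw [endPoint_configuration hσ hu hle hpar hap hc hcn (mem_Icc.1 hk).1 (mem_Icc.1 hk).2,
    endPoint_configuration hσ hu hle hpar hap hc hcn hσk.1 hσk.2]
  exact insideReach_configuration hσ hu hle hpar hap hc (mem_Icc.1 hk).1 (mem_Icc.1 hk).2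

/-- Realisability of non-crossing matchings.  Let `N ≥ 1` and let
`a⁺, b⁺, a⁻, b⁻` be nonnegative integers such that `a⁺ + b⁺`, `a⁻ + b⁻` and `N` have
the same parity and `n_tot = a⁺ + b⁺ + a⁻ + b⁻ ≤ N`.  Then every non-crossing perfect
matching `σ` of `⟦1, n_tot⟧` (in the cyclic order of the ends) is realised by some
configuration `η` on `⟦1,N⟧` with exactly the prescribed numbers of outgoing edges. -/
theorem realisation_of_noncrossing_matching
    (N : ℕ) (hN : 1 ≤ N) (ap bp an bn : ℕ)
    (hpar1 : (ap + bp) % 2 = N % 2) (hpar2 : (an + bn) % 2 = N % 2)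
    (hle : ap + bp + an + bn ≤ N)
    (σ : ℕ → ℕ)
    (hmaps : ∀ i ∈ Finset.Icc 1 (ap + bp + an + bn), σ i ∈ Finset.Icc 1 (ap + bp + an + bn))
    (hinv : ∀ i ∈ Finset.Icc 1 (ap + bp + an + bn), σ (σ i) = i)
    (hfix : ∀ i ∈ Finset.Icc 1 (ap + bp + an + bn), σ i ≠ i)
    (hnc : ¬ ∃ i ∈ Finset.Icc 1 (ap + bp + an + bn), ∃ j ∈ Finset.Icc 1 (ap + bp + an + bn),
      i < j ∧ j < σ i ∧ σ i < σ j) :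
    ∃ η : ℤ → ℤ × ℤ,
      (∀ x ∈ Finset.Icc (1 : ℤ) N,
        ((η x).1 = 1 ∨ (η x).1 = -1) ∧ ((η x).2 = 1 ∨ (η x).2 = -1)) ∧
      (UL N η).card = ap ∧ (UR N η).card = bp ∧
      (LL N η).card = an ∧ (LR N η).card = bn ∧
      ∀ k ∈ Finset.Icc 1 (ap + bp + an + bn),
        InsideReach N η (endPoint N η k) (endPoint N η (σ k)) :=
  realisation_of_noncrossing_matching_general N ap bp an bn hpar1 hle σ hmaps hinv hfix hnc
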